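/- arXiv:2510.18051 — 2 statements merged into one kernel-verified Lean document; each statement's English description precedes it below -/
import Mathlib

section
/- Perlis–Walker theorem for cyclic groups: for a finite cyclic group C_n, there is a ℚ-algebra isomorphism ℚ[C_n] ≅ ∏_{d ∣ n} ℚ(ζ_d), the product over all positive divisors d of n of the d-th cyclotomic fields. -/
/-!
The cyclic group `C_n` is generated by one element `g` subject only to `g ^ n = 1`, so
`ℚ[C_n] ≅ ℚ[X] ⧸ (X ^ n - 1)`. The factors of `X ^ n - 1 = ∏_{d ∣ n} Φ_d` are pairwise coprime,
so the Chinese remainder theorem splits this quotient into `∏_{d ∣ n} ℚ[X] ⧸ (Φ_d)`. Finally `Φ_d` is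
irreducible over `ℚ`, hence the minimal polynomial of `ζ_d`, and `ℚ[X] ⧸ (Φ_d) ≅ ℚ(ζ_d)`.
-/

open Polynomial Function

theorem MonoidHom.ext_mzmod {n : ℕ} [NeZero n] {M : Type*} [Monoid M]
    ⦃f g : Multiplicative (ZMod n) →* M⦄
    (h : f (.ofAdd (1 : ZMod n)) = g (.ofAdd 1)) : f = g := by
  refine MonoidHom.ext fun x => ?_
  obtain ⟨k, hk⟩ := ZMod.natCast_zmod_surjective x.toAdd
  have hx : x = Multiplicative.ofAdd (1 : ZMod n) ^ k := by
    rw [← ofAdd_nsmul, nsmul_one, hk, ofAdd_toAdd]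
  rw [hx, map_pow, map_pow, h]

section zmodPowersHom

variable (n : ℕ) [NeZero n] {M : Type*} [Monoid M] (x : M) (hx : x ^ n = 1)

noncomputable def zmodPowersHom : Multiplicative (ZMod n) →* M :=
  let u := (IsUnit.of_pow_eq_one hx (NeZero.ne n)).unit
  (Units.coeHom M).comp <| AddMonoidHom.toMultiplicativeLeft <|
    ZMod.lift n ⟨zmultiplesHom _ (Additive.ofMul u), by
      simpa [← ofMul_pow, u, ← Units.val_inj] using hx⟩

theorem zmodPowersHom_ofAdd_one : zmodPowersHom n x hx (.ofAdd 1) = x := by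
  simp only [zmodPowersHom, MonoidHom.coe_comp, Function.comp_apply,
    AddMonoidHom.toMultiplicativeLeft_apply_apply, toAdd_ofAdd]
  rw [← Int.cast_one, ZMod.lift_coe]
  simp

end zmodPowersHom

theorem AdjoinRoot.root_X_pow_sub_one_pow (R : Type*) [CommRing R] (n : ℕ) :
    root (X ^ n - 1 : R[X]) ^ n = 1 := by
  have h := mk_self (f := (X ^ n - 1 : R[X]))
  rwa [map_sub, map_pow, mk_X, map_one, sub_eq_zero] at h

namespace MonoidAlgebra

variable (R : Type*) [CommRing R] (n : ℕ)

theorem of_ofAdd_one_pow :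
    of R (Multiplicative (ZMod n)) (.ofAdd 1) ^ n = 1 := by
  rw [← map_pow, ← ofAdd_nsmul, nsmul_one, ZMod.natCast_self, ofAdd_zero, map_one]

noncomputable def ofAdjoinRootXPowSubOne :
    AdjoinRoot (X ^ n - 1 : R[X]) →ₐ[R] MonoidAlgebra R (Multiplicative (ZMod n)) :=
  AdjoinRoot.liftAlgHom _ (Algebra.ofId R _) (of R _ (.ofAdd 1)) <| by
    rw [eval₂_sub, eval₂_X_pow, eval₂_one, of_ofAdd_one_pow, sub_self]

theorem ofAdjoinRootXPowSubOne_root :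
    ofAdjoinRootXPowSubOne R n (AdjoinRoot.root _) = of R _ (.ofAdd 1) :=
  AdjoinRoot.liftAlgHom_root _ _ _ _

variable [NeZero n]

noncomputable def toAdjoinRootXPowSubOne :
    MonoidAlgebra R (Multiplicative (ZMod n)) →ₐ[R] AdjoinRoot (X ^ n - 1 : R[X]) :=
  lift R _ _ (zmodPowersHom n _ (AdjoinRoot.root_X_pow_sub_one_pow R n))

theorem toAdjoinRootXPowSubOne_of_ofAdd_one :
    toAdjoinRootXPowSubOne R n (of R _ (.ofAdd 1)) = AdjoinRoot.root _ := by
  rw [toAdjoinRootXPowSubOne, lift_of, zmodPowersHom_ofAdd_one]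

noncomputable def algEquivAdjoinRootXPowSubOne :
    MonoidAlgebra R (Multiplicative (ZMod n)) ≃ₐ[R] AdjoinRoot (X ^ n - 1 : R[X]) :=
  AlgEquiv.ofAlgHom (toAdjoinRootXPowSubOne R n) (ofAdjoinRootXPowSubOne R n)
    (AdjoinRoot.algHom_ext <| by
      simp only [AlgHom.comp_apply, ofAdjoinRootXPowSubOne_root,
        toAdjoinRootXPowSubOne_of_ofAdd_one, AlgHom.id_apply])
    (algHom_ext' (MonoidHom.ext_mzmod <| by
      simp only [MonoidHom.comp_apply, MonoidHom.coe_coe, AlgHom.comp_apply,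
        toAdjoinRootXPowSubOne_of_ofAdd_one, ofAdjoinRootXPowSubOne_root, AlgHom.id_apply])
      (Subsingleton.elim _ _))

end MonoidAlgebra

namespace AdjoinRoot

noncomputable def algEquivPiOfPairwiseCoprime {R ι : Type*} [CommRing R] [Fintype ι]
    (f : ι → R[X]) (hf : Pairwise (IsCoprime on f)) :
    AdjoinRoot (∏ i, f i) ≃ₐ[R] ∀ i, AdjoinRoot (f i) :=
  (Ideal.quotientEquivAlgOfEq R (Ideal.iInf_span_singleton fun _ _ hij => hf hij).symm).trans <|
    AlgEquiv.ofRingEquiv (f := Ideal.quotientInfRingEquivPiQuotient _ fun _ _ hij =>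
      (Ideal.isCoprime_span_singleton_iff _ _).2 (hf hij)) fun _ => rfl

noncomputable def algEquivCyclotomicField {K : Type*} [Field K] (n : ℕ) [NeZero (n : K)]
    (h : Irreducible (cyclotomic n K)) :
    AdjoinRoot (cyclotomic n K) ≃ₐ[K] CyclotomicField n K :=
  haveI : NeZero n := NeZero.nat_of_neZero (Nat.castRingHom K)
  let hζ := IsCyclotomicExtension.zeta_spec n K (CyclotomicField n K)
  have hmin : minpoly K (hζ.powerBasis K).gen = cyclotomic n K :=
    (hζ.minpoly_eq_cyclotomic_of_irreducible h).symm
  equiv' _ (hζ.powerBasis K) (by rw [hmin, aeval_eq, mk_self])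
    (by rw [← hmin]; exact minpoly.aeval K _)

end AdjoinRoot

theorem Polynomial.prod_divisors_cyclotomic_eq_X_pow_sub_one (n : ℕ) [NeZero n] (R : Type*)
    [CommRing R] :
    ∏ d : n.divisors, cyclotomic (d : ℕ) R = X ^ n - 1 := by
  rw [Finset.prod_coe_sort n.divisors (cyclotomic · R),
    prod_cyclotomic_eq_X_pow_sub_one (Nat.pos_of_neZero n)]

/-- Perlis–Walker theorem for cyclic groups: `ℚ[C_n] ≅ ∏_{d ∣ n} ℚ(ζ_d)` as ℚ-algebras. -/
theorem stmt_14 (n : ℕ+) :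
    Nonempty (MonoidAlgebra ℚ (Multiplicative (ZMod n)) ≃ₐ[ℚ]
      ((d : (n : ℕ).divisors) →
        CyclotomicField (d : ℕ) ℚ)) := by
  have hcoprime : Pairwise (IsCoprime on fun d : (n : ℕ).divisors => cyclotomic (d : ℕ) ℚ) :=
    fun d e hde => cyclotomic.isCoprime_rat (Subtype.coe_injective.ne hde)
  have hneZero (d : (n : ℕ).divisors) : NeZero (d : ℕ) := ⟨(Nat.pos_of_mem_divisors d.2).ne'⟩
  exact ⟨(MonoidAlgebra.algEquivAdjoinRootXPowSubOne ℚ n).trans <|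
    (AdjoinRoot.algEquivOfEq ℚ _ _ (prod_divisors_cyclotomic_eq_X_pow_sub_one n ℚ).symm).trans <|
    (AdjoinRoot.algEquivPiOfPairwiseCoprime _ hcoprime).trans <|
    AlgEquiv.piCongrRight fun d =>
      AdjoinRoot.algEquivCyclotomicField _ (cyclotomic.irreducible_rat (Nat.pos_of_neZero _))⟩
end

section
/- Let G = A ∗_C B be an amalgamated free product. Then every finite subgroup of G is conjugate in G to a subgroup of A or to a subgroup of B. -/
/-!
`A ∗_C B` acts on its Bass–Serre tree, whose vertices are the cosets `g • A` and `g • B`, and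
the stabiliser of `g • A` is `g A g⁻¹`; so it suffices that a finite group acting on this tree
fixes a vertex. Fix an orbit and let `z` be a vertex minimising the largest distance to it. If
some `γ` moved `z` by at least `2`, the neighbour of `z` on the geodesic to `γ • z` would be
strictly closer to every point of the orbit. So `z` is moved by at most `1`, hence not at all:
the action preserves the type (`A` or `B`) of a vertex, and vertices of the same type are an even
distance apart.

The tree is never built as a graph: the distance from `Gᵢ` to `h • Gⱼ` is the number of changes
in the sequence `i, typeSeq h, j`, where `typeSeq h` lists the factors of the letters of a
reduced word for `h`, which is well defined by the normal form theorem.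
-/

open Function

namespace List

variable {α : Type*} [DecidableEq α]

def switches : List α → ℕ
  | a :: b :: l => (if a = b then 0 else 1) + switches (b :: l)
  | _ => 0

@[simp] theorem switches_nil : switches ([] : List α) = 0 := rfl

@[simp] theorem switches_singleton (a : α) : switches [a] = 0 := rfl

@[simp] theorem switches_cons_cons (a b : α) (l : List α) :
    switches (a :: b :: l) = (if a = b then 0 else 1) + switches (b :: l) := rfl

theorem switches_append_cons (l₁ : List α) (a : α) (l₂ : List α) :
    switches (l₁ ++ a :: l₂) = switches (l₁ ++ [a]) + switches (a :: l₂) := by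
  induction l₁ with
  | nil => simp
  | cons x t ih =>
    cases t with
    | nil => simp
    | cons y t =>
      simp only [cons_append, switches_cons_cons] at ih ⊢
      omega

theorem switches_reverse (l : List α) : switches l.reverse = switches l := by
  induction l with
  | nil => rfl
  | cons a t ih =>
    cases t with
    | nil => rfl
    | cons b t =>
      rw [reverse_cons, reverse_cons, append_assoc, singleton_append, switches_append_cons,
        ← reverse_cons, ih]
      simp [eq_comm, add_comm]

theorem eq_of_mem_of_switches_cons_eq_zero {a : α} {l : List α} (h : switches (a :: l) = 0) :
    ∀ b ∈ l, b = a := by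
  induction l generalizing a with
  | nil => simp
  | cons b t ih =>
    rw [switches_cons_cons] at h
    obtain rfl : a = b := by by_contra hab; simp [hab] at h
    simpa using ih (by simpa using h)

theorem even_switches_cons_append_singleton_iff (a b : Bool) (l : List Bool) :
    Even (switches (a :: (l ++ [b]))) ↔ a = b := by
  induction l generalizing a with
  | nil => cases a <;> cases b <;> decide
  | cons c t ih =>
    rw [cons_append, switches_cons_cons, Nat.even_add, ih]
    cases a <;> cases b <;> cases c <;> decide

end List

theorem exists_forall_dist_smul_le_one {Γ V : Type*} [Group Γ] [Finite Γ] [MulAction Γ V]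
    [Nonempty V] (d : V → V → ℕ)
    (hd : ∀ (γ : Γ) (u v : V), d (γ • u) (γ • v) = d u v)
    (hmid : ∀ u v, 2 ≤ d u v → ∃ m, ∀ w, d m w < d u w ∨ d m w < d v w) :
    ∃ z, ∀ γ : Γ, d z (γ • z) ≤ 1 := by
  have := Fintype.ofFinite Γ
  obtain ⟨v₀⟩ := ‹Nonempty V›
  let radius (u : V) : ℕ := Finset.univ.sup fun γ : Γ => d u (γ • v₀)
  have le_radius (u : V) (γ : Γ) : d u (γ • v₀) ≤ radius u :=
    Finset.le_sup (f := fun γ : Γ => d u (γ • v₀)) (Finset.mem_univ γ)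
  have radius_smul (γ : Γ) (u : V) : radius (γ • u) ≤ radius u :=
    Finset.sup_le fun γ' _ => by
      rw [← hd γ⁻¹, inv_smul_smul, smul_smul]
      exact le_radius u _
  set z := argmin radius
  refine ⟨z, fun γ => ?_⟩
  by_contra! hz
  obtain ⟨m, hm⟩ := hmid _ _ hz
  have hlt (γ' : Γ) : d m (γ' • v₀) < radius z := by
    rcases hm (γ' • v₀) with h | h
    · exact h.trans_le (le_radius z γ')
    · exact h.trans_le ((le_radius _ γ').trans (radius_smul γ z))
  have : radius m < radius z :=
    (Finset.sup_lt_iff ((Nat.zero_le _).trans_lt (hlt 1))).2 fun γ' _ => hlt γ'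
  exact not_lt_argmin radius m this

open Function

namespace Monoid.PushoutI

section ReducedForm

variable {ι : Type*} {G : ι → Type*} [∀ i, Group (G i)] {H : Type*} [Group H]
  {φ : ∀ i, H →* G i} {l l₁ l₂ : List (Σ i, G i)}

variable (φ) in
def evalList (l : List (Σ i, G i)) : PushoutI φ :=
  (l.map fun p => of (φ := φ) p.1 p.2).prod

@[simp] theorem evalList_nil : evalList φ [] = 1 := rfl

@[simp] theorem evalList_cons (p : Σ i, G i) (l : List (Σ i, G i)) :
    evalList φ (p :: l) = of p.1 p.2 * evalList φ l := by
  simp [evalList]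

@[simp] theorem evalList_append (l₁ l₂ : List (Σ i, G i)) :
    evalList φ (l₁ ++ l₂) = evalList φ l₁ * evalList φ l₂ := by
  simp [evalList]

theorem ofCoprodI_prod (w : CoprodI.Word G) : ofCoprodI w.prod = evalList φ w.toList := by
  simp [CoprodI.Word.prod, evalList, map_list_prod, Function.comp_def, ofCoprodI_of]

variable (φ) in
def IsReducedList (l : List (Σ i, G i)) : Prop :=
  (l.map Sigma.fst).IsChain (· ≠ ·) ∧ ∀ p ∈ l, p.2 ∉ (φ p.1).range

theorem IsReducedList.of_cons {p : Σ i, G i} (hl : IsReducedList φ (p :: l)) :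
    IsReducedList φ l :=
  ⟨hl.1.tail, fun q hq => hl.2 q (List.mem_cons_of_mem _ hq)⟩

theorem IsReducedList.append (h₁ : IsReducedList φ l₁) (h₂ : IsReducedList φ l₂)
    (h : ∀ s ∈ (l₁.map Sigma.fst).getLast?, ∀ t ∈ (l₂.map Sigma.fst).head?, s ≠ t) :
    IsReducedList φ (l₁ ++ l₂) := by
  refine ⟨by rw [List.map_append, List.isChain_append]; exact ⟨h₁.1, h₂.1, h⟩, ?_⟩
  simp only [List.mem_append]
  rintro p (hp | hp)
  exacts [h₁.2 p hp, h₂.2 p hp]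

def invList (l : List (Σ i, G i)) : List (Σ i, G i) :=
  (l.map fun p => ⟨p.1, p.2⁻¹⟩).reverse

@[simp] theorem map_fst_invList (l : List (Σ i, G i)) :
    (invList l).map Sigma.fst = (l.map Sigma.fst).reverse := by
  simp [invList, Function.comp_def]

theorem evalList_invList (l : List (Σ i, G i)) :
    evalList φ (invList l) = (evalList φ l)⁻¹ := by
  induction l with
  | nil => rfl
  | cons p t ih => simp [invList, ← ih]

theorem IsReducedList.invList (hl : IsReducedList φ l) : IsReducedList φ (invList l) := by
  refine ⟨?_, ?_⟩
  · rw [map_fst_invList]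
    exact List.isChain_reverse.2 (hl.1.imp fun _ _ h => h.symm)
  · simp only [PushoutI.invList, List.mem_reverse, List.mem_map]
    rintro _ ⟨p, hp, rfl⟩
    simpa using hl.2 p hp

theorem IsReducedList.exists_base_mul_evalList_eq (hl : IsReducedList φ l) (c : H) :
    ∃ l' c', IsReducedList φ l' ∧ l'.map Sigma.fst = l.map Sigma.fst ∧
      base φ c * evalList φ l = evalList φ l' * base φ c' := by
  cases l with
  | nil => exact ⟨[], c, hl, rfl, by simp⟩
  | cons p t =>
    refine ⟨⟨p.1, φ p.1 c * p.2⟩ :: t, 1, ⟨hl.1, ?_⟩, rfl, ?_⟩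
    · simp only [List.mem_cons, forall_eq_or_imp]
      refine ⟨?_, hl.of_cons.2⟩
      rw [mul_mem_cancel_left (MonoidHom.mem_range.2 ⟨c, rfl⟩)]
      exact hl.2 p List.mem_cons_self
    · simp [← of_apply_eq_base φ p.1 c, mul_assoc]

theorem IsReducedList.exists_normalWord [DecidableEq ι] [∀ i, DecidableEq (G i)]
    (d : NormalWord.Transversal φ) (hl : IsReducedList φ l) :
    ∃ w : NormalWord d, w.prod = evalList φ l ∧ w.toList.map Sigma.fst = l.map Sigma.fst := by
  let w : CoprodI.Word G :=
    ⟨l, fun p hp h1 => hl.2 p hp (h1 ▸ one_mem _), (List.isChain_map _).1 hl.1⟩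
  obtain ⟨w', hprod, hmap⟩ :=
    Reduced.exists_normalWord_prod_eq (w := w) d fun p hp => hl.2 p hp
  exact ⟨w', hprod.trans (ofCoprodI_prod w), hmap⟩

theorem NormalWord.Transversal.eq_one_of_mem_set_of_mem_range (d : NormalWord.Transversal φ)
    {i : ι} {g : G i} (hg : g ∈ d.set i) (hφg : g ∈ (φ i).range) : g = 1 := by
  have h := (d.compl i).equiv_snd_eq_self_of_mem_of_one_mem (Subgroup.one_mem _) hg
  rw [(d.compl i).equiv_snd_eq_one_of_mem_of_one_mem (d.one_mem i) hφg] at h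
  exact (congrArg Subtype.val h).symm

variable (φ) in
noncomputable def typeSeq (g : PushoutI φ) : List ι :=
  (Classical.epsilon fun l => IsReducedList φ l ∧ ∃ c, g = evalList φ l * base φ c).map
    Sigma.fst

variable (hφ : ∀ i, Injective (φ i))
include hφ

theorem map_fst_eq_of_base_mul_evalList_eq (h₁ : IsReducedList φ l₁)
    (h₂ : IsReducedList φ l₂) {c₁ c₂ : H}
    (h : base φ c₁ * evalList φ l₁ = base φ c₂ * evalList φ l₂) :
    l₁.map Sigma.fst = l₂.map Sigma.fst := by
  classical
  obtain ⟨d⟩ := NormalWord.transversal_nonempty φ hφ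
  obtain ⟨w₁, hw₁, hm₁⟩ := h₁.exists_normalWord d
  obtain ⟨w₂, hw₂, hm₂⟩ := h₂.exists_normalWord d
  have hw : base φ c₁ • w₁ = base φ c₂ • w₂ :=
    NormalWord.prod_injective (by simp only [NormalWord.prod_smul, hw₁, hw₂, h])
  rw [← hm₁, ← hm₂]
  simpa [NormalWord.base_smul_def] using congrArg (fun w => w.toList.map Sigma.fst) hw

theorem map_fst_eq_of_evalList_mul_base_eq (h₁ : IsReducedList φ l₁)
    (h₂ : IsReducedList φ l₂) {c₁ c₂ : H}
    (h : evalList φ l₁ * base φ c₁ = evalList φ l₂ * base φ c₂) :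
    l₁.map Sigma.fst = l₂.map Sigma.fst := by
  simpa using map_fst_eq_of_base_mul_evalList_eq hφ h₁.invList h₂.invList
    (c₁ := c₁⁻¹) (c₂ := c₂⁻¹) (by simpa [evalList_invList] using congrArg (·⁻¹) h)

theorem exists_isReducedList_eq (g : PushoutI φ) :
    ∃ l c, IsReducedList φ l ∧ g = evalList φ l * base φ c := by
  classical
  obtain ⟨d⟩ := NormalWord.transversal_nonempty φ hφ
  set w : NormalWord d := g • NormalWord.empty
  have hl : IsReducedList φ w.toList :=
    ⟨(List.isChain_map _).2 w.chain_ne, fun p hp hφp =>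
      w.ne_one p hp (d.eq_one_of_mem_set_of_mem_range (w.normalized p.1 p.2 hp) hφp)⟩
  obtain ⟨l, c, hl', -, he⟩ := hl.exists_base_mul_evalList_eq w.head
  refine ⟨l, c, hl', ?_⟩
  rw [← he, ← ofCoprodI_prod]
  have hw := NormalWord.prod_smul g (NormalWord.empty : NormalWord d)
  rw [NormalWord.prod_empty, mul_one] at hw
  exact hw.symm

theorem typeSeq_eq {g : PushoutI φ} {c : H} (hl : IsReducedList φ l)
    (hg : g = evalList φ l * base φ c) : typeSeq φ g = l.map Sigma.fst := by
  obtain ⟨hl', c', hg'⟩ := Classical.epsilon_spec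
    (p := fun l => IsReducedList φ l ∧ ∃ c, g = evalList φ l * base φ c) ⟨l, hl, c, hg⟩
  exact map_fst_eq_of_evalList_mul_base_eq hφ hl' hl (hg'.symm.trans hg)

theorem exists_typeSeq_eq (g : PushoutI φ) : ∃ l c, IsReducedList φ l ∧
    l.map Sigma.fst = typeSeq φ g ∧ g = evalList φ l * base φ c := by
  obtain ⟨l, c, hl, hg⟩ := exists_isReducedList_eq hφ g
  exact ⟨l, c, hl, (typeSeq_eq hφ hl hg).symm, hg⟩

theorem typeSeq_isChain (g : PushoutI φ) : (typeSeq φ g).IsChain (· ≠ ·) := by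
  obtain ⟨l, c, hl, hmap, -⟩ := exists_typeSeq_eq hφ g
  exact hmap ▸ hl.1

theorem typeSeq_eq_of_eq_base_mul {g : PushoutI φ} {c : H} (hl : IsReducedList φ l)
    (hg : g = base φ c * evalList φ l) : typeSeq φ g = l.map Sigma.fst := by
  obtain ⟨l', c', hl', hmap, he⟩ := hl.exists_base_mul_evalList_eq c
  rw [typeSeq_eq hφ hl' (hg.trans he), hmap]

theorem typeSeq_base_mul (c : H) (g : PushoutI φ) : typeSeq φ (base φ c * g) = typeSeq φ g := by
  obtain ⟨l, c', hl, hmap, rfl⟩ := exists_typeSeq_eq hφ g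
  obtain ⟨l', c'', hl', hmap', he⟩ := hl.exists_base_mul_evalList_eq c
  rw [← mul_assoc, he, mul_assoc, ← map_mul, typeSeq_eq hφ hl' rfl, hmap', hmap]

theorem typeSeq_inv (g : PushoutI φ) : typeSeq φ g⁻¹ = (typeSeq φ g).reverse := by
  obtain ⟨l, c, hl, hmap, rfl⟩ := exists_typeSeq_eq hφ g
  rw [typeSeq_eq_of_eq_base_mul hφ hl.invList (c := c⁻¹)
    (by rw [mul_inv_rev, evalList_invList, map_inv]), map_fst_invList, hmap]

theorem typeSeq_mul {a b : PushoutI φ}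
    (h : ∀ s ∈ (typeSeq φ a).getLast?, ∀ t ∈ (typeSeq φ b).head?, s ≠ t) :
    typeSeq φ (a * b) = typeSeq φ a ++ typeSeq φ b := by
  obtain ⟨la, ca, hla, hmapa, rfl⟩ := exists_typeSeq_eq hφ a
  obtain ⟨lb, cb, hlb, hmapb, hb⟩ := exists_typeSeq_eq hφ (base φ ca * b)
  rw [typeSeq_base_mul hφ] at hmapb
  rw [← hmapa, ← hmapb] at h ⊢
  rw [typeSeq_eq hφ (hla.append hlb h) (c := cb)
    (by rw [evalList_append, mul_assoc, hb, mul_assoc]), List.map_append]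

theorem typeSeq_of (i : ι) (a : G i) :
    typeSeq φ (of i a) = [] ∨ typeSeq φ (of i a) = [i] := by
  by_cases ha : a ∈ (φ i).range
  · obtain ⟨c, rfl⟩ := ha
    exact .inl (typeSeq_eq hφ (l := []) ⟨by simp, by simp⟩ (c := c)
      (by simp [of_apply_eq_base]))
  · exact .inr (typeSeq_eq hφ (l := [⟨i, a⟩])
      ⟨by simp, by simpa [MonoidHom.mem_range] using ha⟩ (c := 1) (by simp))

theorem mem_range_base_of_typeSeq_eq_nil {g : PushoutI φ} (h : typeSeq φ g = []) :
    g ∈ (base φ).range := by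
  obtain ⟨l, c, -, hmap, rfl⟩ := exists_typeSeq_eq hφ g
  rw [h, List.map_eq_nil_iff] at hmap
  exact ⟨c, by simp [hmap]⟩

theorem exists_eq_of_mul_of_typeSeq_eq_cons {g : PushoutI φ} {i : ι} {r : List ι}
    (h : typeSeq φ g = i :: r) :
    ∃ (b : G i) (g' : PushoutI φ), g = of i b * g' ∧ typeSeq φ g' = r := by
  obtain ⟨l, c, hl, hmap, rfl⟩ := exists_typeSeq_eq hφ g
  rw [h] at hmap
  obtain ⟨⟨j, b⟩, l', rfl⟩ :=
    List.exists_cons_of_ne_nil (l := l) (by rintro rfl; simp at hmap)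
  simp only [List.map_cons, List.cons.injEq] at hmap
  obtain ⟨rfl, hr⟩ := hmap
  refine ⟨b, evalList φ l' * base φ c, by simp [mul_assoc], ?_⟩
  rw [typeSeq_eq hφ hl.of_cons rfl, hr]

theorem mem_range_of_forall_mem_typeSeq_eq {i : ι} {g : PushoutI φ}
    (h : ∀ t ∈ typeSeq φ g, t = i) : g ∈ (of (φ := φ) i).range := by
  generalize hs : typeSeq φ g = s at h
  induction s generalizing g with
  | nil =>
    obtain ⟨c, rfl⟩ := mem_range_base_of_typeSeq_eq_nil hφ hs
    exact ⟨φ i c, of_apply_eq_base φ i c⟩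
  | cons t r ih =>
    obtain rfl := h t List.mem_cons_self
    obtain ⟨b, g', rfl, hg'⟩ := exists_eq_of_mul_of_typeSeq_eq_cons hφ hs
    exact mul_mem ⟨b, rfl⟩ (ih hg' fun s hs => h s (List.mem_cons_of_mem _ hs))

theorem exists_head_typeSeq_of_mul_ne (i : ι) (y : PushoutI φ) :
    ∃ a : G i, ∀ t ∈ (typeSeq φ (of i a * y)).head?, t ≠ i := by
  cases hy : typeSeq φ y with
  | nil => exact ⟨1, by simp [hy]⟩
  | cons t r =>
    by_cases ht : t = i
    · subst ht
      obtain ⟨b, y', rfl, hy'⟩ := exists_eq_of_mul_of_typeSeq_eq_cons hφ hy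
      refine ⟨b⁻¹, ?_⟩
      rw [← mul_assoc, ← map_mul, inv_mul_cancel, map_one, one_mul, hy']
      have := typeSeq_isChain hφ (of t b * y')
      rw [hy] at this
      intro s hs
      cases r with
      | nil => simp at hs
      | cons s' r =>
        obtain rfl : s' = s := by simpa using hs
        exact (List.isChain_cons_cons.1 this).1.symm
    · exact ⟨1, by simpa [hy] using ht⟩

theorem typeSeq_of_mul_eq_or {i : ι} {y : PushoutI φ}
    (hy : ∀ t ∈ (typeSeq φ y).head?, t ≠ i) (a : G i) :
    typeSeq φ (of i a * y) = typeSeq φ y ∨ typeSeq φ (of i a * y) = i :: typeSeq φ y := by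
  rcases typeSeq_of hφ i a with h | h
  · left
    rw [typeSeq_mul hφ (by simp [h]), h, List.nil_append]
  · right
    rw [typeSeq_mul hφ (by simpa [h, eq_comm] using hy), h, List.singleton_append]

theorem switches_cons_typeSeq_of_mul [DecidableEq ι] {i : ι} (a : G i) (y : PushoutI φ)
    (l : List ι) :
    (i :: (typeSeq φ (of i a * y) ++ l)).switches = (i :: (typeSeq φ y ++ l)).switches := by
  obtain ⟨a₀, ha₀⟩ := exists_head_typeSeq_of_mul_ne hφ i y
  have key (b : G i) : (i :: (typeSeq φ (of i b * (of i a₀ * y)) ++ l)).switches =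
      (i :: (typeSeq φ (of i a₀ * y) ++ l)).switches := by
    rcases typeSeq_of_mul_eq_or hφ ha₀ b with h | h <;> simp [h]
  have hy : y = of i a₀⁻¹ * (of i a₀ * y) := by simp [← mul_assoc]
  rw [hy, ← mul_assoc, ← map_mul, key, key]

end ReducedForm

section BassSerre

variable {G : Bool → Type*} [∀ i, Group (G i)] {H : Type*} [Group H] {φ : ∀ i, H →* G i}

variable (φ) in
/-- `⟨i, g⟩` stands for the vertex `g • (of i).range` of the Bass–Serre tree; different pairs
may stand for the same vertex (`treeDist_mul_of`). -/
noncomputable def treeDist (u v : Σ _ : Bool, PushoutI φ) : ℕ :=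
  (u.1 :: (typeSeq φ (u.2⁻¹ * v.2) ++ [v.1])).switches

theorem treeDist_smul (c : PushoutI φ) (u v : Σ _ : Bool, PushoutI φ) :
    treeDist φ (c • u) (c • v) = treeDist φ u v := by
  obtain ⟨i, g⟩ := u
  obtain ⟨j, h⟩ := v
  simp [treeDist, Sigma.smul_mk, mul_assoc]

theorem treeDist_smul_left (c : PushoutI φ) (u w : Σ _ : Bool, PushoutI φ) :
    treeDist φ (c • u) w = treeDist φ u (c⁻¹ • w) := by
  rw [← treeDist_smul c⁻¹, inv_smul_smul]

variable (hφ : ∀ i, Injective (φ i))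
include hφ

theorem treeDist_mul_of (i : Bool) (g : PushoutI φ) (a : G i) (w : Σ _ : Bool, PushoutI φ) :
    treeDist φ ⟨i, g * of i a⟩ w = treeDist φ ⟨i, g⟩ w := by
  simp only [treeDist, mul_inv_rev, ← map_inv, mul_assoc]
  exact switches_cons_typeSeq_of_mul hφ _ _ _

theorem mem_range_of_treeDist_le_one {i : Bool} {g h : PushoutI φ}
    (hd : treeDist φ ⟨i, g⟩ ⟨i, h⟩ ≤ 1) : g⁻¹ * h ∈ (of (φ := φ) i).range := by
  have heven : Even (treeDist φ ⟨i, g⟩ ⟨i, h⟩) :=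
    (List.even_switches_cons_append_singleton_iff _ _ _).2 rfl
  have h0 : treeDist φ ⟨i, g⟩ ⟨i, h⟩ = 0 := by
    obtain ⟨k, hk⟩ := heven
    omega
  exact mem_range_of_forall_mem_typeSeq_eq hφ fun t ht =>
    List.eq_of_mem_of_switches_cons_eq_zero h0 t (List.mem_append_left _ ht)

/-- `⟨!i, 1⟩` is the neighbour of `⟨i, 1⟩` on the geodesic to `⟨j, h⟩`. -/
theorem treeDist_lt_of_head_typeSeq_ne {i j : Bool} {h : PushoutI φ}
    (hh : ∀ t ∈ (typeSeq φ h).head?, t ≠ i) (hd : 2 ≤ treeDist φ ⟨i, 1⟩ ⟨j, h⟩)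
    (w : Σ _ : Bool, PushoutI φ) :
    treeDist φ ⟨!i, 1⟩ w < treeDist φ ⟨i, 1⟩ w ∨
      treeDist φ ⟨!i, 1⟩ w < treeDist φ ⟨j, h⟩ w := by
  obtain ⟨k, x⟩ := w
  simp only [treeDist, inv_one, one_mul] at hd ⊢
  obtain ⟨a, rest, hx⟩ := List.exists_cons_of_ne_nil
    (List.append_ne_nil_of_right_ne_nil (typeSeq φ x) (List.cons_ne_nil k []))
  rw [hx, List.switches_cons_cons, List.switches_cons_cons]
  by_cases ha : a = i
  · -- the geodesic from `⟨j, h⟩` to `w` passes through `⟨i, 1⟩`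
    right
    subst ha
    have hhead : ∀ t ∈ (typeSeq φ x).head?, t = a := by
      cases hl : typeSeq φ x <;> simp_all
    have hrev : (j :: ((typeSeq φ h).reverse ++ [a])).switches =
        (a :: (typeSeq φ h ++ [j])).switches := by
      rw [← List.switches_reverse]
      simp
    rw [typeSeq_mul hφ, typeSeq_inv hφ, List.append_assoc, hx, ← List.cons_append,
      List.switches_append_cons, List.cons_append, hrev]
    · simp only [Bool.not_eq_eq_eq_not, Bool.eq_not_self, ↓reduceIte]
      omega
    · rw [typeSeq_inv hφ, List.getLast?_reverse]
      intro s hs t ht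
      rw [hhead t ht]
      exact hh s hs
  · left
    have : (!i) = a := by cases i <;> cases a <;> simp_all
    simp [this, Ne.symm ha]

theorem exists_treeDist_lt {u v : Σ _ : Bool, PushoutI φ} (huv : 2 ≤ treeDist φ u v) :
    ∃ m, ∀ w, treeDist φ m w < treeDist φ u w ∨ treeDist φ m w < treeDist φ v w := by
  obtain ⟨i, g⟩ := u
  obtain ⟨j, h⟩ := v
  obtain ⟨a, ha⟩ := exists_head_typeSeq_of_mul_ne hφ i (g⁻¹ * h)
  set c := g * of i a⁻¹
  have hu (w : Σ _ : Bool, PushoutI φ) :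
      treeDist φ ⟨i, g⟩ w = treeDist φ ⟨i, 1⟩ (c⁻¹ • w) := by
    rw [← treeDist_smul_left, Sigma.smul_mk, smul_eq_mul, mul_one, treeDist_mul_of hφ]
  have hv : c⁻¹ • (⟨j, h⟩ : Σ _ : Bool, PushoutI φ) =
      ⟨j, of i a * (g⁻¹ * h)⟩ := by
    simp [c, mul_assoc]
  refine ⟨c • ⟨!i, 1⟩, fun w => ?_⟩
  rw [treeDist_smul_left, hu, ← treeDist_smul c⁻¹ ⟨j, h⟩ w, hv]
  exact treeDist_lt_of_head_typeSeq_ne hφ ha (by rwa [← hv, ← hu]) _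

end BassSerre

end Monoid.PushoutI

open Monoid.PushoutI

/-- In an amalgamated free product `A ∗_C B`, every finite subgroup is conjugate to a
subgroup of (the canonical image of) `A` or of `B`. -/
theorem stmt_16 (G : Bool → Type*) [∀ i, Group (G i)] {H : Type*} [Group H]
    (φ : ∀ i, H →* G i) (hinj : ∀ i, Function.Injective (φ i))
    (K : Subgroup (Monoid.PushoutI φ)) (hK : Finite K) :
    ∃ (g : Monoid.PushoutI φ) (i : Bool),
      ∀ x ∈ K, g * x * g⁻¹ ∈ (Monoid.PushoutI.of (φ := φ) i).range := by
  have : Nonempty (Σ _ : Bool, Monoid.PushoutI φ) := ⟨⟨true, 1⟩⟩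
  obtain ⟨⟨i, g⟩, hz⟩ := exists_forall_dist_smul_le_one (Γ := K) (treeDist φ)
    (fun γ => treeDist_smul (γ : Monoid.PushoutI φ)) (fun _ _ => exists_treeDist_lt hinj)
  refine ⟨g⁻¹, i, fun x hx => ?_⟩
  simpa [mul_assoc] using mem_range_of_treeDist_le_one hinj (hz ⟨x, hx⟩)
end
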